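/- Let W be a Morse sequence on K and let κ be a critical face of W. Then ∂̂(κ) = ∂(∧̃(κ)) ∩ Ŵ and δ̂(κ) = δ(∨̃(κ)) ∩ Ŵ; that is, the critical boundary of κ consists exactly of the critical simplices appearing in the boundary of the extension of κ, and dually for the critical coboundary. -/
import Mathlib


/-! ## Basic notions: simplicial complexes, collapses, expansions, fillings -/

variable {V : Type*} [DecidableEq V]

/-- A (finite) simplicial complex: a finite collection of nonempty finite sets that is
closed under taking nonempty subsets. -/
def IsComplex (K : Finset (Finset V)) : Prop :=
  ∀ τ ∈ K, τ.Nonempty ∧ ∀ σ, σ ⊆ τ → σ.Nonempty → σ ∈ K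

/-- `ν` is a facet (inclusion-maximal face) of `K`. -/
def IsFacet (K : Finset (Finset V)) (ν : Finset V) : Prop :=
  ν ∈ K ∧ ∀ ρ ∈ K, ν ⊆ ρ → ρ = ν

/-- `(σ, τ)` is a free pair for `K`: `σ ⊊ τ` and `τ` is the only face of `K`
strictly containing `σ`. -/
def IsFreePair (K : Finset (Finset V)) (σ τ : Finset V) : Prop :=
  σ ∈ K ∧ τ ∈ K ∧ σ ⊂ τ ∧ ∀ ρ ∈ K, σ ⊂ ρ → ρ = τ

/-- `K` is an elementary expansion of `L` (equivalently, `L` is an elementary collapse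
of `K`): `L = K \ {σ, τ}` for some free pair `(σ, τ)` of `K`. -/
def ElemExpansion (L K : Finset (Finset V)) : Prop :=
  ∃ σ τ, IsFreePair K σ τ ∧ L = K \ {σ, τ}

/-- `K` is an elementary filling of `L` (equivalently, `L` is an elementary perforation
of `K`): `L = K \ {ν}` for some facet `ν` of `K`. -/
def ElemFilling (L K : Finset (Finset V)) : Prop :=
  ∃ ν, IsFacet K ν ∧ L = K \ {ν}

/-- `L` is an elementary collapse of `K`. -/
def ElemCollapse (K L : Finset (Finset V)) : Prop :=
  ∃ σ τ, IsFreePair K σ τ ∧ L = K \ {σ, τ}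

/-- `K` collapses onto `L`: there is a sequence of elementary collapses from `K` to `L`. -/
def CollapsesOnto (K L : Finset (Finset V)) : Prop :=
  Relation.ReflTransGen ElemCollapse K L

/-! ## Morse sequences -/

/-- A Morse sequence `⟨∅ = K₀, …, K_k = K⟩`: each `K_i` is a simplicial complex that is
an elementary expansion or an elementary filling of `K_{i-1}`. -/
structure MorseSeq (V : Type*) [DecidableEq V] where
  k : ℕ
  seq : ℕ → Finset (Finset V)
  cpx : ∀ i ≤ k, IsComplex (seq i)
  init : seq 0 = ∅
  step : ∀ i, 1 ≤ i → i ≤ k → ElemExpansion (seq (i - 1)) (seq i) ∨ ElemFilling (seq (i - 1)) (seq i)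

/-- The simplicial complex `K = K_k` on which the Morse sequence lives. -/
def MorseSeq.cplx (W : MorseSeq V) : Finset (Finset V) := W.seq W.k

/-- A face added by a filling step: a critical face of `W`. -/
def MorseSeq.Critical (W : MorseSeq V) (ν : Finset V) : Prop :=
  ∃ i, 1 ≤ i ∧ i ≤ W.k ∧ W.seq i \ W.seq (i - 1) = {ν}

/-- `(σ, τ)` is a regular pair for `W`: the two faces are added together by an
elementary expansion step. -/
def MorseSeq.Regular (W : MorseSeq V) (σ τ : Finset V) : Prop :=
  ∃ i, 1 ≤ i ∧ i ≤ W.k ∧ σ ⊂ τ ∧ W.seq i \ W.seq (i - 1) = {σ, τ}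

/-- `σ` is lower regular for `W`. -/
def MorseSeq.LowerRegular (W : MorseSeq V) (σ : Finset V) : Prop := ∃ τ, W.Regular σ τ

/-- `τ` is upper regular for `W`. -/
def MorseSeq.UpperRegular (W : MorseSeq V) (τ : Finset V) : Prop := ∃ σ, W.Regular σ τ

/-! ## Chains modulo 2 -/

/-- The boundary `∂(σ)` of a simplex: the chain of its (nonempty) codimension-one faces. -/
def bd (σ : Finset V) : Finset (Finset V) :=
  σ.powerset.filter fun ρ => ρ.Nonempty ∧ ρ.card + 1 = σ.card

/-- The coboundary `δ(σ)` of a simplex in `K`: the chain of faces of `K` of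
codimension one over `σ` containing `σ`. -/
def cobd (K : Finset (Finset V)) (σ : Finset V) : Finset (Finset V) :=
  K.filter fun τ => σ ⊆ τ ∧ σ.card + 1 = τ.card

/-- Mod-2 linear extension: `chainSum c f` is the sum (symmetric difference) of
the chains `f σ` over `σ ∈ c`; an element belongs to it iff it belongs to an odd
number of the `f σ`. -/
def chainSum (c : Finset (Finset V)) (f : Finset V → Finset (Finset V)) : Finset (Finset V) :=
  (c.biUnion f).filter fun ν => (c.filter fun σ => ν ∈ f σ).card % 2 = 1

/-- `c` is a `p`-chain of `K`: a set of `p`-simplices of `K`. -/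
def IsChainOf (K : Finset (Finset V)) (p : ℕ) (c : Finset (Finset V)) : Prop :=
  ∀ ν ∈ c, ν ∈ K ∧ ν.card = p + 1

/-- `c` is a chain of critical `p`-simplices of `W` (an element of `Ŵ[p]`). -/
def IsCritChain (W : MorseSeq V) (p : ℕ) (c : Finset (Finset V)) : Prop :=
  ∀ ν ∈ c, W.Critical ν ∧ ν.card = p + 1

/-! ## Frames, reference and coreference maps -/

/-- A frame on `W`: it assigns to each `p`-simplex of `K` a chain of critical
`p`-simplices of `W`. -/
def IsFrame (W : MorseSeq V) (Υ : Finset V → Finset (Finset V)) : Prop :=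
  ∀ ν ∈ W.cplx, ∀ μ ∈ Υ ν, W.Critical μ ∧ μ.card = ν.card

/-- `Λ` is the reference map of `W`: a frame with `Λ(ν) = ν` for critical `ν`, and
`Λ(τ) = 0`, `Λ(∂τ) = 0` for upper regular `τ`. -/
def IsRefMap (W : MorseSeq V) (Λ : Finset V → Finset (Finset V)) : Prop :=
  IsFrame W Λ ∧ (∀ ν, W.Critical ν → Λ ν = {ν}) ∧
    ∀ τ, W.UpperRegular τ → Λ τ = ∅ ∧ chainSum (bd τ) Λ = ∅

/-- `Λ` is the coreference map of `W`: a frame with `Λ(ν) = ν` for critical `ν`, and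
`Λ(σ) = 0`, `Λ(δσ) = 0` for lower regular `σ`. -/
def IsCorefMap (W : MorseSeq V) (Λ : Finset V → Finset (Finset V)) : Prop :=
  IsFrame W Λ ∧ (∀ ν, W.Critical ν → Λ ν = {ν}) ∧
    ∀ σ, W.LowerRegular σ → Λ σ = ∅ ∧ chainSum (cobd W.cplx σ) Λ = ∅

/-- The extension map `∧̃` of `W` (defined from the coreference map `Vee`):
`∧̃(κ) = {ν ∈ K | κ ∈ ∨(ν)}`. -/
def extMap (W : MorseSeq V) (Vee : Finset V → Finset (Finset V)) (κ : Finset V) :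
    Finset (Finset V) :=
  W.cplx.filter fun ν => κ ∈ Vee ν

/-- The coextension map `∨̃` of `W` (defined from the reference map `Λ`):
`∨̃(κ) = {ν ∈ K | κ ∈ ∧(ν)}`. -/
def coextMap (W : MorseSeq V) (Λ : Finset V → Finset (Finset V)) (κ : Finset V) :
    Finset (Finset V) :=
  W.cplx.filter fun ν => κ ∈ Λ ν


section Aux

open Finset

lemma mem_bd {σ τ : Finset V} : σ ∈ bd τ ↔ σ ⊆ τ ∧ σ.Nonempty ∧ σ.card + 1 = τ.card := by
  simp [bd, and_assoc]

lemma mem_cobd {K : Finset (Finset V)} {σ τ : Finset V} :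
    τ ∈ cobd K σ ↔ τ ∈ K ∧ σ ⊆ τ ∧ σ.card + 1 = τ.card := by
  simp [cobd, and_assoc]

lemma mem_chainSum {c : Finset (Finset V)} {f : Finset V → Finset (Finset V)}
    {ν : Finset V} :
    ν ∈ chainSum c f ↔ (c.filter fun σ => ν ∈ f σ).card % 2 = 1 := by
  unfold chainSum
  simp only [mem_filter, mem_biUnion]
  constructor
  · exact fun h => h.2
  · intro h
    refine ⟨?_, h⟩
    have hne : (c.filter fun σ => ν ∈ f σ).Nonempty := by
      rw [← card_pos]; omega
    obtain ⟨σ, hσ⟩ := hne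
    exact ⟨σ, (mem_filter.1 hσ).1, (mem_filter.1 hσ).2⟩

lemma chainSum_empty_even {c : Finset (Finset V)} {f : Finset V → Finset (Finset V)}
    (h : chainSum c f = ∅) (x : Finset V) :
    (c.filter fun σ => x ∈ f σ).card % 2 = 0 := by
  rcases Nat.mod_two_eq_zero_or_one (c.filter fun σ => x ∈ f σ).card with h0 | h1
  · exact h0
  · exfalso
    have hx : x ∈ chainSum c f := mem_chainSum.2 h1
    rw [h] at hx
    simp at hx

lemma cast_even_zmod {n : ℕ} (h : n % 2 = 0) : (n : ZMod 2) = 0 := by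
  rw [← ZMod.natCast_mod n 2, h, Nat.cast_zero]

lemma MorseSeq.seq_mono (W : MorseSeq V) {i j : ℕ} (hij : i ≤ j) (hj : j ≤ W.k) :
    W.seq i ⊆ W.seq j := by
  induction j with
  | zero =>
    obtain rfl : i = 0 := Nat.le_zero.1 hij
    exact Finset.Subset.rfl
  | succ n ih =>
    rcases Nat.eq_or_lt_of_le hij with h | h
    · subst h; exact Finset.Subset.rfl
    · have h1 : W.seq n ⊆ W.seq (n + 1) := by
        rcases W.step (n + 1) (by omega) hj with ⟨σ, τ, _, hL⟩ | ⟨ρ, _, hL⟩ <;>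
        · rw [show n + 1 - 1 = n from rfl] at hL
          rw [hL]
          exact sdiff_subset
      exact (ih (by omega) (by omega)).trans h1

lemma MorseSeq.crit_mem_cplx (W : MorseSeq V) {ν : Finset V} (hν : W.Critical ν) :
    ν ∈ W.cplx := by
  obtain ⟨i, h1, h2, h3⟩ := hν
  have hm : ν ∈ W.seq i \ W.seq (i - 1) := by rw [h3]; exact mem_singleton_self ν
  exact W.seq_mono h2 le_rfl (mem_sdiff.1 hm).1

lemma MorseSeq.trichotomy (W : MorseSeq V) {ν : Finset V} (hν : ν ∈ W.cplx) :
    W.Critical ν ∨ W.LowerRegular ν ∨ W.UpperRegular ν := by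
  suffices h : ∀ i, i ≤ W.k → ν ∈ W.seq i →
      W.Critical ν ∨ W.LowerRegular ν ∨ W.UpperRegular ν from h W.k le_rfl hν
  intro i
  induction i with
  | zero =>
    intro _ hmem
    rw [W.init] at hmem
    simp at hmem
  | succ n ih =>
    intro hle hmem
    by_cases hn : ν ∈ W.seq n
    · exact ih (by omega) hn
    · rcases W.step (n + 1) (by omega) hle with ⟨σ, τ, hfp, hL⟩ | ⟨ρ, hf, hL⟩
      · rw [show n + 1 - 1 = n from rfl] at hL
        have hsub : {σ, τ} ⊆ W.seq (n + 1) := by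
          intro x hx
          rcases Finset.mem_insert.1 hx with rfl | hx
          · exact hfp.1
          · rw [Finset.mem_singleton.1 hx]; exact hfp.2.1
        have hdiff : W.seq (n + 1) \ W.seq n = {σ, τ} := by
          rw [hL, sdiff_sdiff_right_self]
          exact inf_eq_right.2 hsub
        have hνst : ν ∈ ({σ, τ} : Finset (Finset V)) := by
          rw [← hdiff, mem_sdiff]; exact ⟨hmem, hn⟩
        have hreg : W.Regular σ τ := ⟨n + 1, by omega, hle, hfp.2.2.1, hdiff⟩
        rcases Finset.mem_insert.1 hνst with rfl | hx
        · exact Or.inr (Or.inl ⟨τ, hreg⟩)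
        · rw [Finset.mem_singleton.1 hx]
          exact Or.inr (Or.inr ⟨σ, hreg⟩)
      · rw [show n + 1 - 1 = n from rfl] at hL
        have hdiff : W.seq (n + 1) \ W.seq n = {ρ} := by
          rw [hL, sdiff_sdiff_right_self]
          have : ({ρ} : Finset (Finset V)) ⊆ W.seq (n + 1) := by
            simp [hf.1]
          exact inf_eq_right.2 this
        have hνρ : ν ∈ ({ρ} : Finset (Finset V)) := by
          rw [← hdiff, mem_sdiff]; exact ⟨hmem, hn⟩
        rw [Finset.mem_singleton.1 hνρ]
        exact Or.inl ⟨n + 1, by omega, hle, hdiff⟩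

lemma MorseSeq.bd_mem_cplx (W : MorseSeq V) {τ σ : Finset V} (hτ : τ ∈ W.cplx)
    (hσ : σ ∈ bd τ) : σ ∈ W.cplx := by
  obtain ⟨h1, h2, _⟩ := mem_bd.1 hσ
  exact ((W.cpx W.k le_rfl) τ hτ).2 σ h1 h2

open Classical in
lemma morse_duality (W : MorseSeq V) (Λ Vee : Finset V → Finset (Finset V))
    (hΛ : IsRefMap W Λ) (hV : IsCorefMap W Vee)
    {κ μ : Finset V} (hκ : W.Critical κ) (hμ : W.Critical μ) :
    ((bd κ).filter fun σ => μ ∈ Λ σ).card % 2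
      = ((cobd W.cplx μ).filter fun τ => κ ∈ Vee τ).card % 2 := by
  have hK := W.cpx W.k le_rfl
  have hκK : κ ∈ W.cplx := W.crit_mem_cplx hκ
  have hμK : μ ∈ W.cplx := W.crit_mem_cplx hμ
  have hVκ : κ ∈ Vee κ := by rw [hV.2.1 κ hκ]; exact mem_singleton_self κ
  have hΛμ : μ ∈ Λ μ := by rw [hΛ.2.1 μ hμ]; exact mem_singleton_self μ
  have set1 : ∀ τ ∈ W.cplx, κ ∈ Vee τ →
      (W.cplx.filter fun σ => σ ∈ bd τ ∧ μ ∈ Λ σ ∧ κ ∈ Vee τ)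
        = (bd τ).filter fun σ => μ ∈ Λ σ := by
    intro τ hτ hκτ
    ext σ
    simp only [mem_filter]
    exact ⟨fun ⟨_, h1, h2, _⟩ => ⟨h1, h2⟩,
      fun ⟨h1, h2⟩ => ⟨W.bd_mem_cplx hτ h1, h1, h2, hκτ⟩⟩
  have set2 : ∀ σ ∈ W.cplx, μ ∈ Λ σ →
      (W.cplx.filter fun τ => σ ∈ bd τ ∧ μ ∈ Λ σ ∧ κ ∈ Vee τ)
        = (cobd W.cplx σ).filter fun τ => κ ∈ Vee τ := by
    intro σ hσ hμσ
    have hne : σ.Nonempty := (hK σ hσ).1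
    ext τ
    simp only [mem_filter, mem_bd, mem_cobd]
    constructor
    · rintro ⟨hτ, ⟨hsub, _, hcard⟩, _, hκτ⟩
      exact ⟨⟨hτ, hsub, hcard⟩, hκτ⟩
    · rintro ⟨⟨hτ, hsub, hcard⟩, hκτ⟩
      exact ⟨hτ, ⟨hsub, hne, hcard⟩, hμσ, hκτ⟩
  have main : (((bd κ).filter fun σ => μ ∈ Λ σ).card : ZMod 2)
      = (((cobd W.cplx μ).filter fun τ => κ ∈ Vee τ).card : ZMod 2) := by
    have hcomm := Finset.sum_comm (s := W.cplx) (t := W.cplx)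
      (f := fun τ σ => if σ ∈ bd τ ∧ μ ∈ Λ σ ∧ κ ∈ Vee τ then (1 : ZMod 2) else 0)
    have hL : (∑ τ ∈ W.cplx, ∑ σ ∈ W.cplx,
        if σ ∈ bd τ ∧ μ ∈ Λ σ ∧ κ ∈ Vee τ then (1 : ZMod 2) else 0)
        = (((bd κ).filter fun σ => μ ∈ Λ σ).card : ZMod 2) := by
      rw [Finset.sum_eq_single_of_mem κ hκK]
      · rw [Finset.sum_boole, set1 κ hκK hVκ]
      · intro τ hτ hτκ
        rw [Finset.sum_boole]
        rcases W.trichotomy hτ with hc | hl | hu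
        · have he : (W.cplx.filter fun σ => σ ∈ bd τ ∧ μ ∈ Λ σ ∧ κ ∈ Vee τ) = ∅ := by
            refine Finset.filter_eq_empty_iff.2 fun σ _ h => ?_
            have := h.2.2
            rw [hV.2.1 τ hc, Finset.mem_singleton] at this
            exact (hτκ this.symm).elim
          rw [he]; simp
        · have he : (W.cplx.filter fun σ => σ ∈ bd τ ∧ μ ∈ Λ σ ∧ κ ∈ Vee τ) = ∅ := by
            refine Finset.filter_eq_empty_iff.2 fun σ _ h => ?_
            have := h.2.2
            rw [(hV.2.2 τ hl).1] at this
            simp at this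
          rw [he]; simp
        · by_cases hc : κ ∈ Vee τ
          · rw [set1 τ hτ hc]
            exact cast_even_zmod (chainSum_empty_even (hΛ.2.2 τ hu).2 μ)
          · have he : (W.cplx.filter fun σ => σ ∈ bd τ ∧ μ ∈ Λ σ ∧ κ ∈ Vee τ) = ∅ :=
              Finset.filter_eq_empty_iff.2 fun σ _ h => hc h.2.2
            rw [he]; simp
    have hR : (∑ σ ∈ W.cplx, ∑ τ ∈ W.cplx,
        if σ ∈ bd τ ∧ μ ∈ Λ σ ∧ κ ∈ Vee τ then (1 : ZMod 2) else 0)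
        = (((cobd W.cplx μ).filter fun τ => κ ∈ Vee τ).card : ZMod 2) := by
      rw [Finset.sum_eq_single_of_mem μ hμK]
      · rw [Finset.sum_boole, set2 μ hμK hΛμ]
      · intro σ hσ hσμ
        rw [Finset.sum_boole]
        rcases W.trichotomy hσ with hc | hl | hu
        · have he : (W.cplx.filter fun τ => σ ∈ bd τ ∧ μ ∈ Λ σ ∧ κ ∈ Vee τ) = ∅ := by
            refine Finset.filter_eq_empty_iff.2 fun τ _ h => ?_
            have := h.2.1
            rw [hΛ.2.1 σ hc, Finset.mem_singleton] at this
            exact (hσμ this.symm).elim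
          rw [he]; simp
        · by_cases hm : μ ∈ Λ σ
          · rw [set2 σ hσ hm]
            exact cast_even_zmod (chainSum_empty_even (hV.2.2 σ hl).2 κ)
          · have he : (W.cplx.filter fun τ => σ ∈ bd τ ∧ μ ∈ Λ σ ∧ κ ∈ Vee τ) = ∅ :=
              Finset.filter_eq_empty_iff.2 fun τ _ h => hm h.2.1
            rw [he]; simp
        · have he : (W.cplx.filter fun τ => σ ∈ bd τ ∧ μ ∈ Λ σ ∧ κ ∈ Vee τ) = ∅ := by
            refine Finset.filter_eq_empty_iff.2 fun τ _ h => ?_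
            have := h.2.1
            rw [(hΛ.2.2 σ hu).1] at this
            simp at this
          rw [he]; simp
    rw [← hL, hcomm, hR]
  exact (ZMod.natCast_eq_natCast_iff _ _ _).1 main

end Aux

open Classical in
/-- `∂̂(κ) = ∂(∧̃(κ)) ∩ Ŵ` and `δ̂(κ) = δ(∨̃(κ)) ∩ Ŵ` for every
critical face `κ`. -/
theorem critical_boundary_eq_boundary_of_extension_filter_critical (W : MorseSeq V)
    (Λ Vee : Finset V → Finset (Finset V))
    (hΛ : IsRefMap W Λ) (hV : IsCorefMap W Vee)
    (κ : Finset V) (hκ : W.Critical κ) :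
    chainSum (bd κ) Λ = (chainSum (extMap W Vee κ) bd).filter (fun ν => W.Critical ν) ∧
    chainSum (cobd W.cplx κ) Vee =
      (chainSum (coextMap W Λ κ) (cobd W.cplx)).filter (fun ν => W.Critical ν) := by
  classical
  have hK := W.cpx W.k le_rfl
  have hκK : κ ∈ W.cplx := W.crit_mem_cplx hκ
  constructor
  · ext μ
    rw [mem_chainSum, Finset.mem_filter, mem_chainSum]
    have hset : W.Critical μ → (extMap W Vee κ).filter (fun τ => μ ∈ bd τ)
        = (cobd W.cplx μ).filter fun τ => κ ∈ Vee τ := by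
      intro hμc
      have hμK : μ ∈ W.cplx := W.crit_mem_cplx hμc
      have hne : μ.Nonempty := (hK μ hμK).1
      ext τ
      simp only [extMap, Finset.filter_filter, Finset.mem_filter, mem_bd, mem_cobd]
      constructor
      · rintro ⟨hτ, hκτ, hsub, _, hcard⟩
        exact ⟨⟨hτ, hsub, hcard⟩, hκτ⟩
      · rintro ⟨⟨hτ, hsub, hcard⟩, hκτ⟩
        exact ⟨hτ, hκτ, hsub, hne, hcard⟩
    constructor
    · intro h
      have hμc : W.Critical μ := by
        have hne : ((bd κ).filter fun σ => μ ∈ Λ σ).Nonempty := by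
          rw [← Finset.card_pos]; omega
        obtain ⟨σ, hσ⟩ := hne
        rw [Finset.mem_filter] at hσ
        exact (hΛ.1 σ (W.bd_mem_cplx hκK hσ.1) μ hσ.2).1
      refine ⟨?_, hμc⟩
      rw [hset hμc, ← morse_duality W Λ Vee hΛ hV hκ hμc]
      exact h
    · rintro ⟨h, hμc⟩
      rw [hset hμc] at h
      rw [morse_duality W Λ Vee hΛ hV hκ hμc]
      exact h
  · ext ν
    rw [mem_chainSum, Finset.mem_filter, mem_chainSum]
    have hset : W.Critical ν → (coextMap W Λ κ).filter (fun σ => ν ∈ cobd W.cplx σ)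
        = (bd ν).filter fun σ => κ ∈ Λ σ := by
      intro hνc
      have hνK : ν ∈ W.cplx := W.crit_mem_cplx hνc
      ext σ
      simp only [coextMap, Finset.filter_filter, Finset.mem_filter, mem_bd, mem_cobd]
      constructor
      · rintro ⟨hσ, hκσ, _, hsub, hcard⟩
        exact ⟨⟨hsub, (hK σ hσ).1, hcard⟩, hκσ⟩
      · rintro ⟨hσbd, hκσ⟩
        obtain ⟨hsub, hneσ, hcard⟩ := hσbd
        exact ⟨(hK ν hνK).2 σ hsub hneσ, hκσ, hνK, hsub, hcard⟩
    constructor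
    · intro h
      have hνc : W.Critical ν := by
        have hne : ((cobd W.cplx κ).filter fun τ => ν ∈ Vee τ).Nonempty := by
          rw [← Finset.card_pos]; omega
        obtain ⟨τ, hτ⟩ := hne
        rw [Finset.mem_filter] at hτ
        exact (hV.1 τ (mem_cobd.1 hτ.1).1 ν hτ.2).1
      refine ⟨?_, hνc⟩
      rw [hset hνc, morse_duality W Λ Vee hΛ hV hνc hκ]
      exact h
    · rintro ⟨h, hνc⟩
      rw [hset hνc, morse_duality W Λ Vee hΛ hV hνc hκ] at h
      exact h
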